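/- Let Φ = {φ_1, ..., φ_N} be a unit-norm tight frame for 𝔽^M (𝔽 = ℝ or ℂ) that is biangular, i.e., the angle set A_Φ = { |⟨φ_j, φ_l⟩| : j ≠ l } has exactly two elements c_1 ≠ c_2. Then Φ is equidistributed: there exist positive integers m_1, m_2 with m_1 + m_2 = N − 1 such that for every j ∈ {1, ..., N} and each k ∈ {1, 2}, the number of indices l ≠ j with |⟨φ_j, φ_l⟩| = c_k equals m_k. -/

import Mathlib

/-!
Testing the tight-frame identity `∑ l, ⟨φ_l, x⟩ φ_l = (N/M) x` against `x = φ_j` shows that every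
row of the Gram matrix has the same sum of squared moduli. Off the diagonal a row of a biangular
frame takes only the values `c₁`, `c₂`, so with `m₁` and `m₂` its numbers of occurrences,
`m₁ + m₂ = N - 1` and `m₁ c₁² + m₂ c₂² = N/M - 1`. Since `c₁² ≠ c₂²` this linear system has a
unique solution, which therefore does not depend on the row.
-/

open Finset

section TwoValued

variable {ι : Type*} {s : Finset ι} {f : ι → ℝ} {c₁ c₂ : ℝ}

theorem card_filter_eq_add_card_filter_eq (hc : c₁ ≠ c₂)
    (hf : ∀ i ∈ s, f i = c₁ ∨ f i = c₂) :
    #{i ∈ s | f i = c₁} + #{i ∈ s | f i = c₂} = #s := by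
  have : {i ∈ s | f i = c₂} = {i ∈ s | ¬f i = c₁} := by
    refine filter_congr fun i hi => ⟨fun h => h ▸ hc.symm, fun h => (hf i hi).resolve_left h⟩
  rw [this, card_filter_add_card_filter_not]

theorem sum_comp_eq_of_two_valued (w : ℝ → ℝ)
    (hf : ∀ i ∈ s, f i = c₁ ∨ f i = c₂) :
    ∑ i ∈ s, w (f i) = #s * w c₂ + #{i ∈ s | f i = c₁} * (w c₁ - w c₂) := by
  have hterm : ∀ i ∈ s, w (f i) = w c₂ + if f i = c₁ then w c₁ - w c₂ else 0 := by
    intro i hi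
    split_ifs with h
    · rw [h]; ring
    · rw [(hf i hi).resolve_left h, add_zero]
  rw [sum_congr rfl hterm, sum_add_distrib, ← sum_filter]
  simp only [sum_const, nsmul_eq_mul]

theorem card_filter_eq_of_sum_comp_eq {κ : Type*} {t : Finset κ} {g : κ → ℝ}
    (w : ℝ → ℝ) (hw : w c₁ ≠ w c₂) (hf : ∀ i ∈ s, f i = c₁ ∨ f i = c₂)
    (hg : ∀ k ∈ t, g k = c₁ ∨ g k = c₂) (hcard : #s = #t)
    (hsum : ∑ i ∈ s, w (f i) = ∑ k ∈ t, w (g k)) :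
    #{i ∈ s | f i = c₁} = #{k ∈ t | g k = c₁} := by
  rw [sum_comp_eq_of_two_valued w hf, sum_comp_eq_of_two_valued w hg, hcard] at hsum
  exact_mod_cast mul_right_cancel₀ (sub_ne_zero.mpr hw) (add_left_cancel hsum)

end TwoValued

section TightFrame

variable {𝕜 E ι : Type*} [RCLike 𝕜] [NormedAddCommGroup E] [InnerProductSpace 𝕜 E] [Fintype ι]

theorem sum_norm_inner_sq_of_tight {φ : ι → E} {a : 𝕜}
    (htight : ∀ x, ∑ i, (inner 𝕜 (φ i) x : 𝕜) • φ i = a • x) (x : E) :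
    ∑ i, ‖(inner 𝕜 (φ i) x : 𝕜)‖ ^ 2 = RCLike.re a * ‖x‖ ^ 2 := by
  have h := congrArg (fun y => RCLike.re (inner 𝕜 x y : 𝕜)) (htight x)
  simp only [inner_sum, inner_smul_right, ← inner_conj_symm x (φ _), RCLike.mul_conj,
    inner_self_eq_norm_sq_to_K, map_sum] at h
  norm_cast at h
  rwa [RCLike.re_mul_ofReal] at h

theorem sum_erase_norm_inner_sq_of_tight [DecidableEq ι] {φ : ι → E} {a : 𝕜}
    (htight : ∀ x, ∑ i, (inner 𝕜 (φ i) x : 𝕜) • φ i = a • x) {j : ι} (hj : ‖φ j‖ = 1) :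
    ∑ l ∈ univ.erase j, ‖(inner 𝕜 (φ j) (φ l) : 𝕜)‖ ^ 2 = RCLike.re a - 1 := by
  have h := sum_norm_inner_sq_of_tight htight (φ j)
  simp only [norm_inner_symm (φ _) (φ j), hj, one_pow, mul_one] at h
  rw [sum_erase_eq_sub (mem_univ j), h, inner_self_eq_norm_sq_to_K, hj]
  norm_num

end TightFrame

theorem Set.ncard_setOf_ne_and {ι : Type*} [Fintype ι] [DecidableEq ι] (j : ι) (p : ι → Prop)
    [DecidablePred p] : {l | l ≠ j ∧ p l}.ncard = #{l ∈ Finset.univ.erase j | p l} := by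
  rw [← Set.ncard_coe_finset]
  congr 1
  ext l
  simp

theorem biangular_tight_frame_equidistributed {𝕜 : Type*} [RCLike 𝕜] {M N : ℕ}
    (φ : Fin N → EuclideanSpace 𝕜 (Fin M))
    (hunit : ∀ j, ‖φ j‖ = 1)
    (htight : ∀ x : EuclideanSpace 𝕜 (Fin M),
      ∑ j, (inner 𝕜 (φ j) x : 𝕜) • φ j = ((N : 𝕜) / M) • x)
    (c₁ c₂ : ℝ) (hc : c₁ ≠ c₂)
    (hangles : {r : ℝ | ∃ j l, j ≠ l ∧ ‖(inner 𝕜 (φ j) (φ l) : 𝕜)‖ = r} = {c₁, c₂}) :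
    ∃ m₁ m₂ : ℕ, 0 < m₁ ∧ 0 < m₂ ∧ m₁ + m₂ = N - 1 ∧
      ∀ j, {l | l ≠ j ∧ ‖(inner 𝕜 (φ j) (φ l) : 𝕜)‖ = c₁}.ncard = m₁ ∧
           {l | l ≠ j ∧ ‖(inner 𝕜 (φ j) (φ l) : 𝕜)‖ = c₂}.ncard = m₂ := by
  classical
  set G : Fin N → Fin N → ℝ := fun j l => ‖(inner 𝕜 (φ j) (φ l) : 𝕜)‖
  simp only [Set.ncard_setOf_ne_and]
  have hG : ∀ j, ∀ l ∈ univ.erase j, G j l = c₁ ∨ G j l = c₂ := fun j l hl => by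
    have : G j l ∈ ({c₁, c₂} : Set ℝ) := hangles ▸ ⟨j, l, (ne_of_mem_erase hl).symm, rfl⟩
    simpa using this
  obtain ⟨j₁, l₁, hjl₁, hv₁⟩ : c₁ ∈ {r : ℝ | ∃ j l, j ≠ l ∧ G j l = r} := hangles ▸ by simp
  obtain ⟨j₂, l₂, hjl₂, hv₂⟩ : c₂ ∈ {r : ℝ | ∃ j l, j ≠ l ∧ G j l = r} := hangles ▸ by simp
  have hw : c₁ ^ 2 ≠ c₂ ^ 2 := by
    rwa [Ne, pow_left_inj₀ (hv₁ ▸ norm_nonneg _) (hv₂ ▸ norm_nonneg _) two_ne_zero]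
  have hrow (j : Fin N) := sum_erase_norm_inner_sq_of_tight htight (hunit j)
  set m₁ := #{l ∈ univ.erase j₁ | G j₁ l = c₁}
  have hcount₁ (j : Fin N) : #{l ∈ univ.erase j | G j l = c₁} = m₁ :=
    card_filter_eq_of_sum_comp_eq (· ^ 2) hw (hG j) (hG j₁) (by simp)
      ((hrow j).trans (hrow j₁).symm)
  have hcount₂ (j : Fin N) : #{l ∈ univ.erase j | G j l = c₂} = N - 1 - m₁ := by
    have := card_filter_eq_add_card_filter_eq hc (hG j)
    rw [hcount₁ j, card_erase_of_mem (mem_univ j), card_univ, Fintype.card_fin] at this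
    omega
  have hm₁ : m₁ ≤ N - 1 := (card_filter_le _ _).trans_eq (by simp)
  refine ⟨m₁, N - 1 - m₁, card_pos.mpr ⟨l₁, by simp [hjl₁.symm, hv₁]⟩,
    hcount₂ j₂ ▸ card_pos.mpr ⟨l₂, by simp [hjl₂.symm, hv₂]⟩, Nat.add_sub_cancel' hm₁,
    fun j => ⟨hcount₁ j, hcount₂ j⟩⟩
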